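/- arXiv:2504.06042 — 3 statements merged into one kernel-verified Lean document; each statement's English description precedes it below -/
import Mathlib

section
/- Let f, g : ℝ^m × ℝ^n → ℝ where g(x,·) is μ-strongly convex with minimizer y*(x), A(x,y) = ∇²_{xy} g(x,y), H(x,y) = ∇²_{yy} g(x,y), and define the exact hypergradient G(x) = ∇_x f(x, y*(x)) − A(x, y*(x)) H(x, y*(x))⁻¹ ∇_y f(x, y*(x)) and the approximate hypergradient Ĝ(x, ŷ, v̂) = ∇_x f(x, ŷ) − A(x, ŷ) v̂. Suppose ‖∇_y f‖ ≤ l_f everywhere, ∇_x f and ∇_y f are L_f-Lipschitz, ‖A‖ ≤ L_g and A is ρ-Lipschitz, H is ρ-Lipschitz, and μ·I ⪯ H ⪯ L_g·I. Then ‖Ĝ(x, ŷ, v̂) − G(x)‖ ≤ L₁·‖ŷ − y*(x)‖ + L_g·‖v̂ − H(x,ŷ)⁻¹∇_y f(x,ŷ)‖, where L₁ = L_f + l_f ρ/μ + L_g(L_f/μ + l_f ρ/μ²). -/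
/-!
Write `v(y) = H(x,y)⁻¹ ∇_y f(x,y)` for the solution of the linear system at `y`. Then
`Ĝ - G = (∇_x f(x,ŷ) - ∇_x f(x,y*)) - A(x,ŷ)(v̂ - v(ŷ)) - (A(x,ŷ) v(ŷ) - A(x,y*) v(y*))`.
Strong convexity gives `‖H⁻¹‖ ≤ 1/μ`, so `‖v(ŷ)‖ ≤ l_f/μ`, and the resolvent identity
`H₁⁻¹ - H₂⁻¹ = H₁⁻¹ (H₂ - H₁) H₂⁻¹` shows that `v` is `(L_f/μ + l_f ρ/μ²)`-Lipschitz. The product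
rule for `A(x,y) v(y)` then bounds the last term by `(ρ l_f/μ + L_g (L_f/μ + l_f ρ/μ²)) ‖ŷ - y*‖`.
-/

open scoped RealInnerProductSpace

section Coercive

variable {E : Type*} [NormedAddCommGroup E] [InnerProductSpace ℝ E] {μ : ℝ}

theorem norm_le_norm_apply_div_of_coercive (hμ : 0 < μ) {T : E →L[ℝ] E}
    (hT : ∀ v, μ * ‖v‖ ^ 2 ≤ ⟪v, T v⟫) (v : E) : ‖v‖ ≤ ‖T v‖ / μ := by
  rw [le_div_iff₀ hμ]
  rcases (norm_nonneg v).eq_or_lt with hv | hv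
  · rw [← hv, zero_mul]
    exact norm_nonneg _
  · have : ‖v‖ * (‖v‖ * μ) ≤ ‖v‖ * ‖T v‖ := by
      linarith [hT v, real_inner_le_norm v (T v)]
    exact le_of_mul_le_mul_left this hv

theorem opNorm_le_inv_of_coercive (hμ : 0 < μ) {T S : E →L[ℝ] E}
    (hT : ∀ v, μ * ‖v‖ ^ 2 ≤ ⟪v, T v⟫) (hTS : T * S = 1) : ‖S‖ ≤ μ⁻¹ :=
  S.opNorm_le_bound (inv_nonneg.2 hμ.le) fun w => by
    have hw : T (S w) = w := congrArg (fun L : E →L[ℝ] E => L w) hTS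
    simpa [hw, div_eq_inv_mul] using norm_le_norm_apply_div_of_coercive hμ hT (S w)

theorem norm_inverse_apply_sub_inverse_apply_le (hμ : 0 < μ) {T₁ T₂ S₁ S₂ : E →L[ℝ] E}
    (hT₁ : ∀ v, μ * ‖v‖ ^ 2 ≤ ⟪v, T₁ v⟫) (hT₂ : ∀ v, μ * ‖v‖ ^ 2 ≤ ⟪v, T₂ v⟫)
    (hTS₁ : T₁ * S₁ = 1) (hST₁ : S₁ * T₁ = 1) (hTS₂ : T₂ * S₂ = 1) (hST₂ : S₂ * T₂ = 1)
    (b₁ b₂ : E) :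
    ‖S₁ b₁ - S₂ b₂‖ ≤ ‖T₁ - T₂‖ * ‖b₁‖ / μ ^ 2 + ‖b₁ - b₂‖ / μ := by
  let : Invertible T₁ := ⟨S₁, hST₁, hTS₁⟩
  let : Invertible T₂ := ⟨S₂, hST₂, hTS₂⟩
  have hS₁ := opNorm_le_inv_of_coercive hμ hT₁ hTS₁
  have hS₂ := opNorm_le_inv_of_coercive hμ hT₂ hTS₂
  have resolvent : S₁ - S₂ = S₁ * (T₂ - T₁) * S₂ := invOf_sub_invOf T₁ T₂
  have hdiff : ‖S₁ - S₂‖ ≤ ‖T₁ - T₂‖ / μ ^ 2 :=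
    calc ‖S₁ - S₂‖ ≤ ‖S₁‖ * ‖T₂ - T₁‖ * ‖S₂‖ := resolvent ▸ norm_mul₃_le
      _ ≤ μ⁻¹ * ‖T₂ - T₁‖ * μ⁻¹ := by gcongr
      _ = ‖T₁ - T₂‖ / μ ^ 2 := by rw [norm_sub_rev]; ring
  calc ‖S₁ b₁ - S₂ b₂‖ = ‖(S₁ - S₂) b₁ + S₂ (b₁ - b₂)‖ := by
        rw [sub_apply, map_sub, sub_add_sub_cancel]
    _ ≤ ‖S₁ - S₂‖ * ‖b₁‖ + ‖S₂‖ * ‖b₁ - b₂‖ :=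
        norm_add_le_of_le ((S₁ - S₂).le_opNorm b₁) (S₂.le_opNorm _)
    _ ≤ ‖T₁ - T₂‖ / μ ^ 2 * ‖b₁‖ + μ⁻¹ * ‖b₁ - b₂‖ := by gcongr
    _ = ‖T₁ - T₂‖ * ‖b₁‖ / μ ^ 2 + ‖b₁ - b₂‖ / μ := by ring

end Coercive

theorem ContinuousLinearMap.norm_apply_sub_apply_le {𝕜 E F : Type*} [NontriviallyNormedField 𝕜]
    [SeminormedAddCommGroup E] [SeminormedAddCommGroup F] [NormedSpace 𝕜 E] [NormedSpace 𝕜 F]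
    (A₁ A₂ : E →L[𝕜] F) (v₁ v₂ : E) :
    ‖A₁ v₁ - A₂ v₂‖ ≤ ‖A₁ - A₂‖ * ‖v₁‖ + ‖A₂‖ * ‖v₁ - v₂‖ := by
  calc ‖A₁ v₁ - A₂ v₂‖ = ‖(A₁ - A₂) v₁ + A₂ (v₁ - v₂)‖ := by
        rw [sub_apply, map_sub, sub_add_sub_cancel]
    _ ≤ ‖A₁ - A₂‖ * ‖v₁‖ + ‖A₂‖ * ‖v₁ - v₂‖ :=
        norm_add_le_of_le ((A₁ - A₂).le_opNorm v₁) (A₂.le_opNorm _)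

theorem stmt_9_general {m n : ℕ}
    (Gx : EuclideanSpace ℝ (Fin m) → EuclideanSpace ℝ (Fin n) → EuclideanSpace ℝ (Fin m))
    (Gy : EuclideanSpace ℝ (Fin m) → EuclideanSpace ℝ (Fin n) → EuclideanSpace ℝ (Fin n))
    (A : EuclideanSpace ℝ (Fin m) → EuclideanSpace ℝ (Fin n) →
      (EuclideanSpace ℝ (Fin n) →L[ℝ] EuclideanSpace ℝ (Fin m)))
    (H Hinv : EuclideanSpace ℝ (Fin m) → EuclideanSpace ℝ (Fin n) →
      (EuclideanSpace ℝ (Fin n) →L[ℝ] EuclideanSpace ℝ (Fin n)))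
    (ystar : EuclideanSpace ℝ (Fin m) → EuclideanSpace ℝ (Fin n))
    (μ lf Lf Lg ρ : ℝ) (hμ : 0 < μ)
    (hHinv₁ : ∀ x y, (H x y).comp (Hinv x y) = ContinuousLinearMap.id ℝ _)
    (hHinv₂ : ∀ x y, (Hinv x y).comp (H x y) = ContinuousLinearMap.id ℝ _)
    (hlf : ∀ x y, ‖Gy x y‖ ≤ lf)
    (hGxLip : ∀ x y₁ y₂, ‖Gx x y₁ - Gx x y₂‖ ≤ Lf * ‖y₁ - y₂‖)
    (hGyLip : ∀ x y₁ y₂, ‖Gy x y₁ - Gy x y₂‖ ≤ Lf * ‖y₁ - y₂‖)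
    (hA : ∀ x y, ‖A x y‖ ≤ Lg)
    (hALip : ∀ x y₁ y₂, ‖A x y₁ - A x y₂‖ ≤ ρ * ‖y₁ - y₂‖)
    (hHLip : ∀ x y₁ y₂, ‖H x y₁ - H x y₂‖ ≤ ρ * ‖y₁ - y₂‖)
    (hHlower : ∀ x y v, μ * ‖v‖ ^ 2 ≤ ⟪v, H x y v⟫)
    (x : EuclideanSpace ℝ (Fin m)) (yhat : EuclideanSpace ℝ (Fin n))
    (vhat : EuclideanSpace ℝ (Fin n)) :
    ‖(Gx x yhat - A x yhat vhat) -
        (Gx x (ystar x) - A x (ystar x) (Hinv x (ystar x) (Gy x (ystar x))))‖ ≤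
      (Lf + lf * ρ / μ + Lg * (Lf / μ + lf * ρ / μ ^ 2)) * ‖yhat - ystar x‖ +
        Lg * ‖vhat - Hinv x yhat (Gy x yhat)‖ := by
  set y := ystar x
  set v : EuclideanSpace ℝ (Fin n) → EuclideanSpace ℝ (Fin n) := fun y' => Hinv x y' (Gy x y')
  set Δ := ‖yhat - y‖
  have hLg : 0 ≤ Lg := (norm_nonneg _).trans (hA x y)
  have hρΔ : 0 ≤ ρ * Δ := (norm_nonneg _).trans (hALip x yhat y)
  have hv : ‖v yhat‖ ≤ lf / μ := by
    refine ((Hinv x yhat).le_opNorm _).trans ?_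
    rw [← inv_mul_eq_div]
    gcongr
    exacts [opNorm_le_inv_of_coercive hμ (hHlower x yhat) (hHinv₁ x yhat), hlf x yhat]
  have hv_sub : ‖v yhat - v y‖ ≤ (Lf / μ + lf * ρ / μ ^ 2) * Δ :=
    calc ‖v yhat - v y‖
        ≤ ‖H x yhat - H x y‖ * ‖Gy x yhat‖ / μ ^ 2 + ‖Gy x yhat - Gy x y‖ / μ :=
          norm_inverse_apply_sub_inverse_apply_le hμ (hHlower x yhat) (hHlower x y)
            (hHinv₁ x yhat) (hHinv₂ x yhat) (hHinv₁ x y) (hHinv₂ x y) _ _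
      _ ≤ ρ * Δ * lf / μ ^ 2 + Lf * Δ / μ := by
          gcongr
          exacts [hHLip x yhat y, hlf x yhat, hGyLip x yhat y]
      _ = (Lf / μ + lf * ρ / μ ^ 2) * Δ := by ring
  have hAv : ‖A x yhat (v yhat) - A x y (v y)‖ ≤
      (lf * ρ / μ + Lg * (Lf / μ + lf * ρ / μ ^ 2)) * Δ :=
    calc ‖A x yhat (v yhat) - A x y (v y)‖
        ≤ ‖A x yhat - A x y‖ * ‖v yhat‖ + ‖A x y‖ * ‖v yhat - v y‖ :=
          (A x yhat).norm_apply_sub_apply_le _ _ _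
      _ ≤ ρ * Δ * (lf / μ) + Lg * ((Lf / μ + lf * ρ / μ ^ 2) * Δ) := by
          gcongr
          exacts [hALip x yhat y, hA x y]
      _ = (lf * ρ / μ + Lg * (Lf / μ + lf * ρ / μ ^ 2)) * Δ := by ring
  calc ‖(Gx x yhat - A x yhat vhat) - (Gx x y - A x y (v y))‖
      = ‖(Gx x yhat - Gx x y) - A x yhat (vhat - v yhat) - (A x yhat (v yhat) - A x y (v y))‖ := by
        rw [map_sub]; abel_nf
    _ ≤ ‖Gx x yhat - Gx x y‖ + ‖A x yhat (vhat - v yhat)‖ +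
          ‖A x yhat (v yhat) - A x y (v y)‖ :=
        norm_sub_le_of_le (norm_sub_le _ _) le_rfl
    _ ≤ Lf * Δ + Lg * ‖vhat - v yhat‖ + (lf * ρ / μ + Lg * (Lf / μ + lf * ρ / μ ^ 2)) * Δ := by
        gcongr
        exacts [hGxLip x yhat y, (A x yhat).le_opNorm _ |>.trans (by gcongr; exact hA x yhat)]
    _ = (Lf + lf * ρ / μ + Lg * (Lf / μ + lf * ρ / μ ^ 2)) * Δ + Lg * ‖vhat - v yhat‖ := by ring

theorem stmt_9 {m n : ℕ}
    (Gx : EuclideanSpace ℝ (Fin m) → EuclideanSpace ℝ (Fin n) → EuclideanSpace ℝ (Fin m))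
    (Gy : EuclideanSpace ℝ (Fin m) → EuclideanSpace ℝ (Fin n) → EuclideanSpace ℝ (Fin n))
    (A : EuclideanSpace ℝ (Fin m) → EuclideanSpace ℝ (Fin n) →
      (EuclideanSpace ℝ (Fin n) →L[ℝ] EuclideanSpace ℝ (Fin m)))
    (H Hinv : EuclideanSpace ℝ (Fin m) → EuclideanSpace ℝ (Fin n) →
      (EuclideanSpace ℝ (Fin n) →L[ℝ] EuclideanSpace ℝ (Fin n)))
    (ystar : EuclideanSpace ℝ (Fin m) → EuclideanSpace ℝ (Fin n))
    (μ lf Lf Lg ρ : ℝ) (hμ : 0 < μ)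
    (hHinv₁ : ∀ x y, (H x y).comp (Hinv x y) = ContinuousLinearMap.id ℝ _)
    (hHinv₂ : ∀ x y, (Hinv x y).comp (H x y) = ContinuousLinearMap.id ℝ _)
    (hlf : ∀ x y, ‖Gy x y‖ ≤ lf)
    (hGxLip : ∀ x y₁ y₂, ‖Gx x y₁ - Gx x y₂‖ ≤ Lf * ‖y₁ - y₂‖)
    (hGyLip : ∀ x y₁ y₂, ‖Gy x y₁ - Gy x y₂‖ ≤ Lf * ‖y₁ - y₂‖)
    (hA : ∀ x y, ‖A x y‖ ≤ Lg)
    (hALip : ∀ x y₁ y₂, ‖A x y₁ - A x y₂‖ ≤ ρ * ‖y₁ - y₂‖)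
    (hHLip : ∀ x y₁ y₂, ‖H x y₁ - H x y₂‖ ≤ ρ * ‖y₁ - y₂‖)
    (hHlower : ∀ x y v, μ * ‖v‖ ^ 2 ≤ ⟪v, H x y v⟫)
    (hHupper : ∀ x y v, ⟪v, H x y v⟫ ≤ Lg * ‖v‖ ^ 2)
    (x : EuclideanSpace ℝ (Fin m)) (yhat : EuclideanSpace ℝ (Fin n))
    (vhat : EuclideanSpace ℝ (Fin n)) :
    ‖(Gx x yhat - A x yhat vhat) -
        (Gx x (ystar x) - A x (ystar x) (Hinv x (ystar x) (Gy x (ystar x))))‖ ≤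
      (Lf + lf * ρ / μ + Lg * (Lf / μ + lf * ρ / μ ^ 2)) * ‖yhat - ystar x‖ +
        Lg * ‖vhat - Hinv x yhat (Gy x yhat)‖ :=
  stmt_9_general Gx Gy A H Hinv ystar μ lf Lf Lg ρ hμ hHinv₁ hHinv₂ hlf hGxLip hGyLip hA hALip hHLip
    hHlower x yhat vhat
end

section
/- Let F : ℝ^m → ℝ be differentiable with L_F-Lipschitz gradient and bounded below by F*. Suppose iterates satisfy x_{t+1} = x_t − (1/a_{t+1}) ĝ_t, where a_{t+1}² = a_t² + ‖ĝ_t‖², a_0 > 0, and ‖∇F(x_t) − ĝ_t‖² ≤ ε for all t. Then for each t, F(x_{t+1}) ≤ F(x_t) − (1/(2a_{t+1}))‖∇F(x_t)‖² − (1/(2a_{t+1}))(1 − L_F/a_{t+1})‖ĝ_t‖² + ε/(2a_{t+1}). -/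
open InnerProductSpace

lemma descent_lemma {m : ℕ}
    (F : EuclideanSpace ℝ (Fin m) → ℝ)
    (gradF : EuclideanSpace ℝ (Fin m) → EuclideanSpace ℝ (Fin m))
    (LF : ℝ)
    (hgrad : ∀ x, HasGradientAt F (gradF x) x)
    (hLip : ∀ x y, ‖gradF x - gradF y‖ ≤ LF * ‖x - y‖)
    (x v : EuclideanSpace ℝ (Fin m)) :
    F (x + v) ≤ F x + ⟪gradF x, v⟫_ℝ + LF / 2 * ‖v‖ ^ 2 := by
  set ψ : ℝ → ℝ := fun s => F (x + s • v) - s * ⟪gradF x, v⟫_ℝ - LF / 2 * s ^ 2 * ‖v‖ ^ 2 with hψ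
  have hderiv : ∀ s : ℝ, HasDerivAt ψ
      (⟪gradF (x + s • v), v⟫_ℝ - ⟪gradF x, v⟫_ℝ - LF * s * ‖v‖ ^ 2) s := by
    intro s
    have hc : HasDerivAt (fun s : ℝ => x + s • v) v s := by
      simpa using ((hasDerivAt_id s).smul_const v).const_add x
    have h1 : HasDerivAt (fun s : ℝ => F (x + s • v)) (⟪gradF (x + s • v), v⟫_ℝ) s := by
      have := (hgrad (x + s • v)).hasFDerivAt.comp_hasDerivAt s hc
      simp only [InnerProductSpace.toDual_apply_apply] at this
      exact this
    have h2 : HasDerivAt (fun s : ℝ => s * ⟪gradF x, v⟫_ℝ) (⟪gradF x, v⟫_ℝ) s := by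
      simpa using (hasDerivAt_id s).mul_const _
    have h3 : HasDerivAt (fun s : ℝ => LF / 2 * s ^ 2 * ‖v‖ ^ 2) (LF * s * ‖v‖ ^ 2) s := by
      have := ((hasDerivAt_pow 2 s).const_mul (LF / 2)).mul_const (‖v‖ ^ 2)
      refine this.congr_deriv ?_
      ring
    exact (h1.sub h2).sub h3
  have hanti : AntitoneOn ψ (Set.Icc (0:ℝ) 1) := by
    apply antitoneOn_of_deriv_nonpos (convex_Icc 0 1)
    · exact Continuous.continuousOn (by
        have : Differentiable ℝ ψ := fun s => (hderiv s).differentiableAt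
        exact this.continuous)
    · exact fun s hs => ((hderiv s).differentiableAt).differentiableWithinAt
    · intro s hs
      rw [interior_Icc] at hs
      rw [(hderiv s).deriv]
      have hinner : ⟪gradF (x + s • v), v⟫_ℝ - ⟪gradF x, v⟫_ℝ ≤ LF * s * ‖v‖ ^ 2 := by
        have h1 : ⟪gradF (x + s • v) - gradF x, v⟫_ℝ ≤ ‖gradF (x + s • v) - gradF x‖ * ‖v‖ :=
          real_inner_le_norm _ _
        have h2 : ‖gradF (x + s • v) - gradF x‖ ≤ LF * (s * ‖v‖) := by
          have := hLip (x + s • v) x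
          simpa [norm_smul, abs_of_pos hs.1] using this
        calc ⟪gradF (x + s • v), v⟫_ℝ - ⟪gradF x, v⟫_ℝ
            = ⟪gradF (x + s • v) - gradF x, v⟫_ℝ := by rw [inner_sub_left]
          _ ≤ ‖gradF (x + s • v) - gradF x‖ * ‖v‖ := h1
          _ ≤ LF * (s * ‖v‖) * ‖v‖ := by
              exact mul_le_mul_of_nonneg_right h2 (norm_nonneg _)
          _ = LF * s * ‖v‖ ^ 2 := by ring
      linarith
  have key := hanti (Set.left_mem_Icc.mpr zero_le_one) (Set.right_mem_Icc.mpr zero_le_one) zero_le_one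
  have h0 : ψ 0 = F x := by simp [hψ]
  have h1 : ψ 1 = F (x + v) - ⟪gradF x, v⟫_ℝ - LF / 2 * ‖v‖ ^ 2 := by simp [hψ]
  rw [h0, h1] at key
  linarith

theorem stmt_11 {m : ℕ}
    (F : EuclideanSpace ℝ (Fin m) → ℝ)
    (gradF : EuclideanSpace ℝ (Fin m) → EuclideanSpace ℝ (Fin m))
    (LF Fstar ε : ℝ)
    (hgrad : ∀ x, HasGradientAt F (gradF x) x)
    (hLip : ∀ x y, ‖gradF x - gradF y‖ ≤ LF * ‖x - y‖)
    (hlb : ∀ x, Fstar ≤ F x)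
    (x : ℕ → EuclideanSpace ℝ (Fin m))
    (ghat : ℕ → EuclideanSpace ℝ (Fin m))
    (a : ℕ → ℝ) (ha0 : 0 < a 0) (hapos : ∀ t, 0 < a t)
    (harec : ∀ t, (a (t + 1)) ^ 2 = (a t) ^ 2 + ‖ghat t‖ ^ 2)
    (hx : ∀ t, x (t + 1) = x t - (1 / a (t + 1)) • ghat t)
    (herr : ∀ t, ‖gradF (x t) - ghat t‖ ^ 2 ≤ ε)
    (t : ℕ) :
    F (x (t + 1)) ≤ F (x t) - (1 / (2 * a (t + 1))) * ‖gradF (x t)‖ ^ 2 -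
      (1 / (2 * a (t + 1))) * (1 - LF / a (t + 1)) * ‖ghat t‖ ^ 2 +
      ε / (2 * a (t + 1)) := by
  set A := a (t + 1) with hA
  have hApos : 0 < A := hapos (t + 1)
  set v : EuclideanSpace ℝ (Fin m) := -((1 / A) • ghat t) with hv
  have hxt : x (t + 1) = x t + v := by
    rw [hx t, hv]; abel
  have hd := descent_lemma F gradF LF hgrad hLip (x t) v
  rw [← hxt] at hd
  have hinner : ⟪gradF (x t), v⟫_ℝ = -(1 / A) * ⟪gradF (x t), ghat t⟫_ℝ := by
    rw [hv, inner_neg_right, real_inner_smul_right]; ring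
  have hnv : ‖v‖ ^ 2 = (1 / A) ^ 2 * ‖ghat t‖ ^ 2 := by
    rw [hv, norm_neg, norm_smul]
    rw [Real.norm_eq_abs, abs_of_pos (by positivity)]
    ring
  have hpolar : ⟪gradF (x t), ghat t⟫_ℝ
      = (‖gradF (x t)‖ ^ 2 + ‖ghat t‖ ^ 2 - ‖gradF (x t) - ghat t‖ ^ 2) / 2 := by
    have := @norm_sub_sq_real (EuclideanSpace ℝ (Fin m)) _ _ (gradF (x t)) (ghat t)
    linarith
  have herr' := herr t
  rw [hinner, hnv, hpolar] at hd
  have h1 : 1 / (2 * A) * ‖gradF (x t) - ghat t‖ ^ 2 ≤ ε / (2 * A) := by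
    rw [div_eq_mul_one_div ε, mul_comm ε]
    exact mul_le_mul_of_nonneg_left herr' (by positivity)
  have hexp : -(1 / A) * ((‖gradF (x t)‖ ^ 2 + ‖ghat t‖ ^ 2 - ‖gradF (x t) - ghat t‖ ^ 2) / 2)
      + LF / 2 * ((1 / A) ^ 2 * ‖ghat t‖ ^ 2)
      = -(1 / (2 * A)) * ‖gradF (x t)‖ ^ 2 - (1 / (2 * A)) * (1 - LF / A) * ‖ghat t‖ ^ 2
        + 1 / (2 * A) * ‖gradF (x t) - ghat t‖ ^ 2 := by
    field_simp
    ring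
  nlinarith [hd, h1, hexp]
end

section
/- Under the setting of the inexact AdaGrad-Norm one-step lemma, if additionally a_{t+1} ≥ 2L_F for all t ≥ t₁, then for every T > t₁: ∑_{t=t₁}^{T−1} ‖ĝ_t‖²/a_{t+1} ≤ 4(F(x_{t₁}) − F*) + ∑_{t=t₁}^{T−1} 2ε/a_{t+1}, and consequently a_T ≤ a_{t₁} + 4(F(x_{t₁}) − F*) + 2(T−t₁)ε/a_0. -/
open InnerProductSpace

lemma descent_lemma_s12 {E : Type*} [NormedAddCommGroup E] [InnerProductSpace ℝ E] [CompleteSpace E]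
    (F : E → ℝ) (gradF : E → E) (L : ℝ)
    (hgrad : ∀ x, HasGradientAt F (gradF x) x)
    (hLip : ∀ x y, ‖gradF x - gradF y‖ ≤ L * ‖x - y‖) (p q : E) :
    F q ≤ F p + inner ℝ (gradF p) (q - p) + L / 2 * ‖q - p‖ ^ 2 := by
  set v := q - p with hv
  set ψ : ℝ → ℝ := fun t => F (p + t • v) - t * inner ℝ (gradF p) v - L / 2 * t ^ 2 * ‖v‖ ^ 2 with hψ
  have hline : ∀ t : ℝ, HasDerivAt (fun s : ℝ => p + s • v) v t := by
    intro t
    simpa using ((hasDerivAt_id t).smul_const v).const_add p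
  have hφ : ∀ t : ℝ, HasDerivAt (fun s : ℝ => F (p + s • v))
      (inner ℝ (gradF (p + t • v)) v) t := by
    intro t
    have h1 := (hgrad (p + t • v)).hasFDerivAt.comp_hasDerivAt t (hline t)
    exact h1
  have hψ' : ∀ t : ℝ, HasDerivAt ψ
      (inner ℝ (gradF (p + t • v)) v - inner ℝ (gradF p) v - L * t * ‖v‖ ^ 2) t := by
    intro t
    have h2 : HasDerivAt (fun s : ℝ => s * inner ℝ (gradF p) v) (inner ℝ (gradF p) v) t := by
      simpa using (hasDerivAt_id t).mul_const (inner ℝ (gradF p) v : ℝ)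
    have h3 : HasDerivAt (fun s : ℝ => L / 2 * s ^ 2 * ‖v‖ ^ 2) (L * t * ‖v‖ ^ 2) t := by
      have := ((hasDerivAt_pow 2 t).const_mul (L / 2)).mul_const (‖v‖ ^ 2)
      convert this using 1
      · rfl
      · rfl
      · simp only [Nat.cast_ofNat, Nat.reduceSub, pow_one]; ring
    exact ((hφ t).sub h2).sub h3
  have hanti : AntitoneOn ψ (Set.Icc 0 1) := by
    apply antitoneOn_of_deriv_nonpos (convex_Icc 0 1)
    · exact fun t _ => ((hψ' t).continuousAt).continuousWithinAt
    · exact fun t _ => ((hψ' t).differentiableAt).differentiableWithinAt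
    · intro t ht
      rw [interior_Icc] at ht
      rw [(hψ' t).deriv]
      have hle : inner ℝ (gradF (p + t • v)) v - inner ℝ (gradF p) v
          ≤ L * t * ‖v‖ ^ 2 := by
        have h4 : (inner ℝ (gradF (p + t • v) - gradF p) v : ℝ)
            ≤ ‖gradF (p + t • v) - gradF p‖ * ‖v‖ := real_inner_le_norm _ _
        have h5 : ‖gradF (p + t • v) - gradF p‖ ≤ L * ‖(p + t • v) - p‖ := hLip _ _
        have h6 : ‖(p + t • v) - p‖ = t * ‖v‖ := by
          rw [add_sub_cancel_left, norm_smul, Real.norm_eq_abs, abs_of_pos ht.1]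
        rw [inner_sub_left] at h4
        rw [h6] at h5
        nlinarith [norm_nonneg v, mul_le_mul_of_nonneg_right h5 (norm_nonneg v)]
      linarith
  have := hanti (Set.left_mem_Icc.2 zero_le_one) (Set.right_mem_Icc.2 zero_le_one) zero_le_one
  simp only [hψ] at this
  simp only [zero_smul, add_zero, one_smul, zero_mul, zero_pow, mul_zero, sub_zero, mul_one,
    one_pow] at this
  have hq : p + v = q := by rw [hv]; abel
  rw [hq] at this
  linarith

theorem stmt_12 {m : ℕ}
    (F : EuclideanSpace ℝ (Fin m) → ℝ)
    (gradF : EuclideanSpace ℝ (Fin m) → EuclideanSpace ℝ (Fin m))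
    (LF Fstar ε : ℝ)
    (hgrad : ∀ x, HasGradientAt F (gradF x) x)
    (hLip : ∀ x y, ‖gradF x - gradF y‖ ≤ LF * ‖x - y‖)
    (hlb : ∀ x, Fstar ≤ F x)
    (x : ℕ → EuclideanSpace ℝ (Fin m))
    (ghat : ℕ → EuclideanSpace ℝ (Fin m))
    (a : ℕ → ℝ) (ha0 : 0 < a 0) (hapos : ∀ t, 0 < a t)
    (harec : ∀ t, (a (t + 1)) ^ 2 = (a t) ^ 2 + ‖ghat t‖ ^ 2)
    (hx : ∀ t, x (t + 1) = x t - (1 / a (t + 1)) • ghat t)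
    (herr : ∀ t, ‖gradF (x t) - ghat t‖ ^ 2 ≤ ε)
    (t₁ : ℕ) (hbig : ∀ t, t₁ ≤ t → 2 * LF ≤ a (t + 1))
    (T : ℕ) (hT : t₁ < T) :
    (∑ t ∈ Finset.Ico t₁ T, ‖ghat t‖ ^ 2 / a (t + 1) ≤
        4 * (F (x t₁) - Fstar) + ∑ t ∈ Finset.Ico t₁ T, 2 * ε / a (t + 1)) ∧
      a T ≤ a t₁ + 4 * (F (x t₁) - Fstar) + 2 * ((T : ℝ) - (t₁ : ℝ)) * ε / a 0 := by
  have hεnn : 0 ≤ ε := le_trans (sq_nonneg _) (herr 0)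
  have hmono : ∀ t, a t ≤ a (t + 1) := by
    intro t
    nlinarith [harec t, hapos t, hapos (t + 1), sq_nonneg ‖ghat t‖]
  have ha0le : ∀ t, a 0 ≤ a t := by
    intro t
    induction t with
    | zero => exact le_refl _
    | succ n ih => exact le_trans ih (hmono n)
  -- one-step descent
  have hstep : ∀ t, t₁ ≤ t →
      ‖ghat t‖ ^ 2 / a (t + 1) ≤ 4 * (F (x t) - F (x (t + 1))) + 2 * ε / a (t + 1) := by
    intro t ht
    set A := a (t + 1) with hA'
    have hA : 0 < A := hapos (t + 1)
    set G := ‖ghat t‖ with hG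
    set I : ℝ := inner ℝ (gradF (x t)) (ghat t) with hI'
    have hd := descent_lemma_s12 F gradF LF hgrad hLip (x t) (x (t + 1))
    have hdiff : x (t + 1) - x t = -((1 / A) • ghat t) := by
      rw [hx t]; abel
    rw [hdiff] at hd
    have hinner : (inner ℝ (gradF (x t)) (-((1 / A) • ghat t)) : ℝ) = -((1 / A) * I) := by
      rw [inner_neg_right, real_inner_smul_right]
    have hnorm : ‖-((1 / A) • ghat t)‖ ^ 2 = (1 / A) ^ 2 * G ^ 2 := by
      rw [norm_neg, norm_smul, mul_pow, Real.norm_eq_abs, sq_abs]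
    rw [hinner, hnorm] at hd
    -- lower bound on the inner product
    have hIlow : G ^ 2 / 2 - ε / 2 ≤ I := by
      have hsub : (inner ℝ (gradF (x t) - ghat t) (ghat t) : ℝ) = I - G ^ 2 := by
        rw [inner_sub_left, real_inner_self_eq_norm_sq]
      have habs : |(inner ℝ (gradF (x t) - ghat t) (ghat t) : ℝ)|
          ≤ ‖gradF (x t) - ghat t‖ * ‖ghat t‖ := abs_real_inner_le_norm _ _
      have h7 := neg_abs_le (inner ℝ (gradF (x t) - ghat t) (ghat t) : ℝ)
      nlinarith [herr t, sq_nonneg (‖gradF (x t) - ghat t‖ - G), hsub, habs, h7]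
    have hLF : LF ≤ A / 2 := by linarith [hbig t ht]
    have h2 : LF / 2 * ((1 / A) ^ 2 * G ^ 2) ≤ (1 / A) * (G ^ 2 / 4) := by
      have hmul := mul_le_mul_of_nonneg_right
        (by linarith : LF / 2 ≤ A / 4) (by positivity : (0 : ℝ) ≤ (1 / A) ^ 2 * G ^ 2)
      have heq : A / 4 * ((1 / A) ^ 2 * G ^ 2) = (1 / A) * (G ^ 2 / 4) := by
        field_simp
      linarith [heq ▸ hmul]
    have h1 : (1 / A) * (G ^ 2 / 2 - ε / 2) ≤ (1 / A) * I :=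
      mul_le_mul_of_nonneg_left hIlow (by positivity)
    have hd'' : F (x (t + 1)) ≤ F (x t) - (1 / A) * (G ^ 2 / 2 - ε / 2)
        + (1 / A) * (G ^ 2 / 4) := by linarith
    have e1 : G ^ 2 / A = 4 * ((1 / A) * (G ^ 2 / 4)) := by ring
    have e2 : 2 * ε / A = 4 * ((1 / A) * (ε / 2)) := by ring
    have e3 : (1 / A) * (G ^ 2 / 2 - ε / 2)
        = 2 * ((1 / A) * (G ^ 2 / 4)) - (1 / A) * (ε / 2) := by ring
    rw [e1, e2]
    rw [e3] at hd''
    linarith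
  -- telescoping for F
  have htelF : ∑ t ∈ Finset.Ico t₁ T, (F (x t) - F (x (t + 1))) = F (x t₁) - F (x T) := by
    rw [Finset.sum_Ico_eq_sum_range]
    have := Finset.sum_range_sub' (fun i => F (x (t₁ + i))) (T - t₁)
    simp only [Nat.add_zero, ← Nat.add_assoc] at this
    rw [this, Nat.add_sub_cancel' hT.le]
  have part1 : ∑ t ∈ Finset.Ico t₁ T, ‖ghat t‖ ^ 2 / a (t + 1) ≤
      4 * (F (x t₁) - Fstar) + ∑ t ∈ Finset.Ico t₁ T, 2 * ε / a (t + 1) := by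
    have hsum : ∑ t ∈ Finset.Ico t₁ T, ‖ghat t‖ ^ 2 / a (t + 1) ≤
        ∑ t ∈ Finset.Ico t₁ T, (4 * (F (x t) - F (x (t + 1))) + 2 * ε / a (t + 1)) := by
      apply Finset.sum_le_sum
      intro t htmem
      exact hstep t (Finset.mem_Ico.1 htmem).1
    rw [Finset.sum_add_distrib, ← Finset.mul_sum, htelF] at hsum
    have := hlb (x T)
    linarith
  refine ⟨part1, ?_⟩
  -- telescoping for a
  have htela : ∑ t ∈ Finset.Ico t₁ T, (a (t + 1) - a t) = a T - a t₁ := by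
    rw [Finset.sum_Ico_eq_sum_range]
    have := Finset.sum_range_sub (fun i => a (t₁ + i)) (T - t₁)
    simp only [Nat.add_zero, ← Nat.add_assoc] at this
    rw [this, Nat.add_sub_cancel' hT.le]
  have hstep2 : ∀ t, a (t + 1) - a t ≤ ‖ghat t‖ ^ 2 / a (t + 1) := by
    intro t
    rw [le_div_iff₀ (hapos (t + 1))]
    nlinarith [harec t, hapos t, hmono t]
  have hsum2 : a T - a t₁ ≤ ∑ t ∈ Finset.Ico t₁ T, ‖ghat t‖ ^ 2 / a (t + 1) := by
    rw [← htela]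
    exact Finset.sum_le_sum fun t _ => hstep2 t
  have hsumε : ∑ t ∈ Finset.Ico t₁ T, 2 * ε / a (t + 1) ≤
      ((T : ℝ) - (t₁ : ℝ)) * (2 * ε / a 0) := by
    have hle : ∑ t ∈ Finset.Ico t₁ T, 2 * ε / a (t + 1) ≤
        ∑ t ∈ Finset.Ico t₁ T, 2 * ε / a 0 := by
      apply Finset.sum_le_sum
      intro t _
      exact div_le_div_of_nonneg_left (by linarith) ha0 (ha0le (t + 1))
    rw [Finset.sum_const, Nat.card_Ico, nsmul_eq_mul] at hle
    rw [show ((T : ℝ) - (t₁ : ℝ)) = ((T - t₁ : ℕ) : ℝ) by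
      rw [Nat.cast_sub hT.le]]
    exact hle
  have : 2 * ((T : ℝ) - (t₁ : ℝ)) * ε / a 0 = ((T : ℝ) - (t₁ : ℝ)) * (2 * ε / a 0) := by ring
  rw [this]
  linarith
end
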